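/- If (V,m) is a totally associative ternary algebra, then μ defined on W = V⊗V by μ((x1⊗x2)⊗(y1⊗y2)) = m(x1,x2,y1)⊗y2 is an associative binary multiplication on W. -/
import Mathlib


open TensorProduct

/-- The binary multiplication on `W = V ⊗ V` associated to a ternary multiplication `m`
on `V`: the bilinear extension of `μ((x1⊗x2)⊗(y1⊗y2)) = m(x1,x2,y1) ⊗ y2`. -/
noncomputable def mu16 {K V : Type*} [Field K] [AddCommGroup V] [Module K V]
    (m : V →ₗ[K] V →ₗ[K] V →ₗ[K] V) :
    (V ⊗[K] V) →ₗ[K] (V ⊗[K] V) →ₗ[K] (V ⊗[K] V) :=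
  TensorProduct.lift
    ((LinearMap.llcomp K V (V →ₗ[K] V) ((V ⊗[K] V) →ₗ[K] (V ⊗[K] V))
        (LinearMap.rTensorHom V)) ∘ₗ m)

theorem stmt16 {K V : Type*} [Field K] [AddCommGroup V] [Module K V]
    (m : V →ₗ[K] V →ₗ[K] V →ₗ[K] V)
    (htot : ∀ x1 x2 x3 x4 x5 : V,
      m (m x1 x2 x3) x4 x5 = m x1 (m x2 x3 x4) x5 ∧
      m x1 (m x2 x3 x4) x5 = m x1 x2 (m x3 x4 x5)) :
    (∀ x1 x2 y1 y2 : V,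
      mu16 m (x1 ⊗ₜ[K] x2) (y1 ⊗ₜ[K] y2) = m x1 x2 y1 ⊗ₜ[K] y2) ∧
    (∀ a b c : V ⊗[K] V, mu16 m (mu16 m a b) c = mu16 m a (mu16 m b c)) := by
  have hsimp : ∀ x1 x2 y1 y2 : V,
      mu16 m (x1 ⊗ₜ[K] x2) (y1 ⊗ₜ[K] y2) = m x1 x2 y1 ⊗ₜ[K] y2 := by
    intro x1 x2 y1 y2
    simp [mu16, LinearMap.rTensorHom]
  refine ⟨hsimp, ?_⟩
  intro a b c
  induction a using TensorProduct.induction_on with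
  | zero => simp
  | add x y hx hy => simp [hx, hy]
  | tmul a1 a2 =>
    induction b using TensorProduct.induction_on with
    | zero => simp
    | add x y hx hy => simp [hx, hy]
    | tmul b1 b2 =>
      induction c using TensorProduct.induction_on with
      | zero => simp
      | add x y hx hy => simp [hx, hy]
      | tmul c1 c2 =>
        rw [hsimp, hsimp, hsimp, hsimp]
        rw [(htot a1 a2 b1 b2 c1).1, (htot a1 a2 b1 b2 c1).2]
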